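/- Let ((Δ_i), (ψ_i)) and ((Δ̄_i), (ψ̄_i)) be two 1-parameter formal deformations of a Coder pair (C, ψ_C) that are equivalent via a formal automorphism (φ_i)_{i≥0} with φ_0 = Id_C, i.e. for all k ≥ 0: Σ_{i+j=k} Δ̄_i ∘ φ_j = Σ_{a+b+c=k} (φ_a ⊗ φ_b) ∘ Δ_c and Σ_{i+j=k} ψ̄_i ∘ φ_j = Σ_{i+j=k} φ_i ∘ ψ_j. Then the infinitesimals are cohomologous: Δ̄_1 = Δ_1 + δ_c(φ_1) and ψ̄_1 = ψ_1 − ω(φ_1); i.e. (Δ̄_1, ψ̄_1) − (Δ_1, ψ_1) = d_c^1(φ_1). -/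

import Mathlib

open TensorProduct LinearMap

variable {k C : Type} [Field k] [AddCommGroup C] [Module k C]

/-- `δ_c(g) = (Id_C ⊗ g) ∘ Δ − Δ ∘ g + (g ⊗ Id_C) ∘ Δ` for `g ∈ Hom(C, C)`
(coadjoint coefficients). -/
noncomputable def delta1 (Δ : C →ₗ[k] C ⊗[k] C) (g : C →ₗ[k] C) : C →ₗ[k] C ⊗[k] C :=
  LinearMap.lTensor C g ∘ₗ Δ - Δ ∘ₗ g + LinearMap.rTensor C g ∘ₗ Δ

/-- `δ_c(f) = (Id_C ⊗ f) ∘ Δ − (Δ ⊗ Id_C) ∘ f + (Id_C ⊗ Δ) ∘ f − (f ⊗ Id_C) ∘ Δ`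
for `f ∈ Hom(C, C ⊗ C)` (coadjoint coefficients). -/
noncomputable def delta2 (Δ : C →ₗ[k] C ⊗[k] C) (f : C →ₗ[k] C ⊗[k] C) :
    C →ₗ[k] C ⊗[k] (C ⊗[k] C) :=
  LinearMap.lTensor C f ∘ₗ Δ
    - (TensorProduct.assoc k C C C).toLinearMap ∘ₗ LinearMap.rTensor C Δ ∘ₗ f
    + LinearMap.lTensor C Δ ∘ₗ f
    - (TensorProduct.assoc k C C C).toLinearMap ∘ₗ LinearMap.rTensor C f ∘ₗ Δ

/-- `ω(g) = ψ_C ∘ g − g ∘ ψ_C` for `g ∈ Hom(C, C)`. -/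
noncomputable def omega1 (ψC : C →ₗ[k] C) (g : C →ₗ[k] C) : C →ₗ[k] C :=
  ψC ∘ₗ g - g ∘ₗ ψC

/-- `ω(f) = (ψ_C ⊗ Id_C) ∘ f + (Id_C ⊗ ψ_C) ∘ f − f ∘ ψ_C` for `f ∈ Hom(C, C ⊗ C)`. -/
noncomputable def omega2 (ψC : C →ₗ[k] C) (f : C →ₗ[k] C ⊗[k] C) : C →ₗ[k] C ⊗[k] C :=
  LinearMap.rTensor C ψC ∘ₗ f + LinearMap.lTensor C ψC ∘ₗ f - f ∘ₗ ψC

/-- A 1-parameter formal deformation `(Δ_t = Σ Δ_i t^i, ψ_t = Σ ψ_i t^i)` of a Coder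
pair `(C, ψ_C)`: `Δ_0 = Δ`, `ψ_0 = ψ_C`, and for every `k ≥ 0`,
`Σ_{i+j=k} ((Id_C ⊗ Δ_i) ∘ Δ_j − (Δ_i ⊗ Id_C) ∘ Δ_j) = 0` and
`Σ_{i+j=k} (Δ_i ∘ ψ_j − (ψ_i ⊗ Id_C) ∘ Δ_j − (Id_C ⊗ ψ_i) ∘ Δ_j) = 0`. -/
noncomputable def IsFormalDeformation (Δ : C →ₗ[k] C ⊗[k] C) (ψC : C →ₗ[k] C)
    (Δs : ℕ → (C →ₗ[k] C ⊗[k] C)) (ψs : ℕ → (C →ₗ[k] C)) : Prop :=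
  Δs 0 = Δ ∧ ψs 0 = ψC ∧
  (∀ n : ℕ, ∑ p ∈ Finset.HasAntidiagonal.antidiagonal n, LinearMap.lTensor C (Δs p.1) ∘ₗ Δs p.2
      = ∑ p ∈ Finset.HasAntidiagonal.antidiagonal n,
          (TensorProduct.assoc k C C C).toLinearMap ∘ₗ LinearMap.rTensor C (Δs p.1) ∘ₗ Δs p.2) ∧
  (∀ n : ℕ, ∑ p ∈ Finset.HasAntidiagonal.antidiagonal n, Δs p.1 ∘ₗ ψs p.2
      = ∑ p ∈ Finset.HasAntidiagonal.antidiagonal n,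
          (LinearMap.rTensor C (ψs p.1) ∘ₗ Δs p.2 + LinearMap.lTensor C (ψs p.1) ∘ₗ Δs p.2))

open Finset HasAntidiagonal

theorem Finset.Nat.sum_antidiagonal_one {M : Type*} [AddCommMonoid M] (f : ℕ × ℕ → M) :
    ∑ p ∈ antidiagonal 1, f p = f (0, 1) + f (1, 0) := by
  simp [Nat.sum_antidiagonal_succ]

section FirstOrder

variable {Δ : C →ₗ[k] C ⊗[k] C} {ψC : C →ₗ[k] C} {φs : ℕ → C →ₗ[k] C}

theorem coproduct_one_eq_add_delta1 {Δs Δb : ℕ → C →ₗ[k] C ⊗[k] C}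
    (hΔs : Δs 0 = Δ) (hΔb : Δb 0 = Δ) (hφ0 : φs 0 = LinearMap.id)
    (h : ∑ p ∈ antidiagonal 1, Δb p.1 ∘ₗ φs p.2
      = ∑ p ∈ antidiagonal 1, ∑ q ∈ antidiagonal p.2, map (φs p.1) (φs q.1) ∘ₗ Δs q.2) :
    Δb 1 = Δs 1 + delta1 Δ (φs 1) := by
  simp only [Nat.sum_antidiagonal_one, Nat.antidiagonal_zero, sum_singleton, hΔs, hΔb, hφ0,
    ← lTensor_def, ← rTensor_def, lTensor_id, comp_id, id_comp] at h
  rw [delta1, eq_sub_of_add_eq' h]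
  abel

theorem coderivation_one_eq_sub_omega1 {ψs ψb : ℕ → C →ₗ[k] C}
    (hψs : ψs 0 = ψC) (hψb : ψb 0 = ψC) (hφ0 : φs 0 = LinearMap.id)
    (h : ∑ p ∈ antidiagonal 1, ψb p.1 ∘ₗ φs p.2 = ∑ p ∈ antidiagonal 1, φs p.1 ∘ₗ ψs p.2) :
    ψb 1 = ψs 1 - omega1 ψC (φs 1) := by
  simp only [Nat.sum_antidiagonal_one, hψs, hψb, hφ0, comp_id, id_comp] at h
  rw [omega1, eq_sub_of_add_eq' h]
  abel

end FirstOrder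

theorem equivalent_deformations_cohomologous_infinitesimals_general
    (Δ : C →ₗ[k] C ⊗[k] C)
    (ψC : C →ₗ[k] C)
    (Δs : ℕ → (C →ₗ[k] C ⊗[k] C)) (ψs : ℕ → (C →ₗ[k] C))
    (hdef : IsFormalDeformation Δ ψC Δs ψs)
    (Δb : ℕ → (C →ₗ[k] C ⊗[k] C)) (ψb : ℕ → (C →ₗ[k] C))
    (hdefb : IsFormalDeformation Δ ψC Δb ψb)
    (φs : ℕ → (C →ₗ[k] C)) (hφ0 : φs 0 = LinearMap.id)
    (hequiv1 : ∀ n : ℕ, ∑ p ∈ Finset.HasAntidiagonal.antidiagonal n, Δb p.1 ∘ₗ φs p.2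
      = ∑ p ∈ Finset.HasAntidiagonal.antidiagonal n, ∑ q ∈ Finset.HasAntidiagonal.antidiagonal p.2,
          TensorProduct.map (φs p.1) (φs q.1) ∘ₗ Δs q.2)
    (hequiv2 : ∀ n : ℕ, ∑ p ∈ Finset.HasAntidiagonal.antidiagonal n, ψb p.1 ∘ₗ φs p.2
      = ∑ p ∈ Finset.HasAntidiagonal.antidiagonal n, φs p.1 ∘ₗ ψs p.2) :
    Δb 1 = Δs 1 + delta1 Δ (φs 1) ∧ ψb 1 = ψs 1 - omega1 ψC (φs 1) := by
  obtain ⟨hΔs, hψs, -, -⟩ := hdef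
  obtain ⟨hΔb, hψb, -, -⟩ := hdefb
  exact ⟨coproduct_one_eq_add_delta1 hΔs hΔb hφ0 (hequiv1 1),
    coderivation_one_eq_sub_omega1 hψs hψb hφ0 (hequiv2 1)⟩

/-- If two 1-parameter formal deformations of a Coder pair `(C, ψ_C)` are equivalent
via a formal automorphism `Φ_t = Σ φ_i t^i` with `φ_0 = Id_C`, then their
infinitesimals are cohomologous: `Δ̄_1 = Δ_1 + δ_c(φ_1)` and `ψ̄_1 = ψ_1 − ω(φ_1)`,
i.e. `(Δ̄_1, ψ̄_1) − (Δ_1, ψ_1) = d_c^1(φ_1)`. -/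
theorem equivalent_deformations_cohomologous_infinitesimals [CharZero k]
    (Δ : C →ₗ[k] C ⊗[k] C)
    (hΔ : (TensorProduct.assoc k C C C).toLinearMap ∘ₗ LinearMap.rTensor C Δ ∘ₗ Δ
        = LinearMap.lTensor C Δ ∘ₗ Δ)
    (ψC : C →ₗ[k] C)
    (hψC : Δ ∘ₗ ψC = LinearMap.rTensor C ψC ∘ₗ Δ + LinearMap.lTensor C ψC ∘ₗ Δ)
    (Δs : ℕ → (C →ₗ[k] C ⊗[k] C)) (ψs : ℕ → (C →ₗ[k] C))
    (hdef : IsFormalDeformation Δ ψC Δs ψs)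
    (Δb : ℕ → (C →ₗ[k] C ⊗[k] C)) (ψb : ℕ → (C →ₗ[k] C))
    (hdefb : IsFormalDeformation Δ ψC Δb ψb)
    (φs : ℕ → (C →ₗ[k] C)) (hφ0 : φs 0 = LinearMap.id)
    (hequiv1 : ∀ n : ℕ, ∑ p ∈ Finset.HasAntidiagonal.antidiagonal n, Δb p.1 ∘ₗ φs p.2
      = ∑ p ∈ Finset.HasAntidiagonal.antidiagonal n, ∑ q ∈ Finset.HasAntidiagonal.antidiagonal p.2,
          TensorProduct.map (φs p.1) (φs q.1) ∘ₗ Δs q.2)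
    (hequiv2 : ∀ n : ℕ, ∑ p ∈ Finset.HasAntidiagonal.antidiagonal n, ψb p.1 ∘ₗ φs p.2
      = ∑ p ∈ Finset.HasAntidiagonal.antidiagonal n, φs p.1 ∘ₗ ψs p.2) :
    Δb 1 = Δs 1 + delta1 Δ (φs 1) ∧ ψb 1 = ψs 1 - omega1 ψC (φs 1) :=
  equivalent_deformations_cohomologous_infinitesimals_general Δ ψC Δs ψs hdef Δb ψb hdefb φs hφ0
    hequiv1 hequiv2
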